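/- Let μ be a probability measure, Φ a convex Orlicz function, and ‖·‖_Φ the Luxemburg norm with ‖𝟙‖_Φ the norm of the constant function 1. Then for any f in the Orlicz space and any minimizer M_Φ(f) of a ↦ ‖f−a‖_Φ: ‖f − μ(f)‖_Φ ≤ (1 + Φ⁻¹(1)·‖𝟙‖_Φ)·‖f − M_Φ(f)‖_Φ. -/

import Mathlib

open MeasureTheory

/-- The Luxemburg norm of `g` with respect to the Orlicz function `Φ` and measure `μ`. -/
noncomputable def luxNorm {Ω : Type*} [MeasurableSpace Ω] (μ : Measure Ω)
    (Φ : ℝ → ℝ) (g : Ω → ℝ) : ℝ :=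
  sInf {lam : ℝ | 0 < lam ∧ ∫ ω, Φ (|g ω| / lam) ∂μ ≤ 1}

/-- The generalized inverse of `Φ` at `1`. -/
noncomputable def invPhiOne (Φ : ℝ → ℝ) : ℝ := sInf {t : ℝ | 0 ≤ t ∧ 1 ≤ Φ t}

/-!
Write `f - μ(f) = (f - M) + (M - μ(f))`. The Luxemburg norm is subadditive and
`‖c‖_Φ = |c| ‖𝟙‖_Φ` for constants `c`, while Jensen's inequality for `Φ(|f - M| / λ)` gives
`|μ(f) - M| ≤ ∫ |f - M| dμ ≤ Φ⁻¹(1) ‖f - M‖_Φ`. When `f - μ(f)` lies outside the Orlicz heart,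
the Bochner integrals in `luxNorm` take the junk value `0` and the left-hand side vanishes.
-/

open Set Filter Topology Pointwise

section OrliczFunction

variable {Φ : ℝ → ℝ}

lemma map_nonneg_of_monotoneOn (hmono : MonotoneOn Φ (Ici 0)) (hΦ0 : Φ 0 = 0) {t : ℝ}
    (ht : 0 ≤ t) : 0 ≤ Φ t :=
  hΦ0 ▸ hmono self_mem_Ici ht ht

lemma ConvexOn.map_le_div_mul_map (hconv : ConvexOn ℝ (Ici 0) Φ) (hΦ0 : Φ 0 = 0) {t s : ℝ}
    (ht : 0 ≤ t) (hts : t ≤ s) : Φ t ≤ t / s * Φ s := by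
  rcases ht.eq_or_lt with rfl | ht'
  · simp [hΦ0]
  have hs : 0 < s := ht'.trans_le hts
  have h := hconv.2 self_mem_Ici hs.le (sub_nonneg.2 (div_le_one_of_le₀ hts hs.le))
    (div_nonneg ht hs.le) (sub_add_cancel 1 (t / s))
  simpa [hΦ0, div_mul_cancel₀ _ hs.ne'] using h

lemma ConvexOn.map_add_div_add_le (hconv : ConvexOn ℝ (Ici 0) Φ) {x y p q : ℝ}
    (hx : 0 ≤ x) (hy : 0 ≤ y) (hp : 0 < p) (hq : 0 < q) :
    Φ ((x + y) / (p + q)) ≤ p / (p + q) * Φ (x / p) + q / (p + q) * Φ (y / q) := by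
  have hpq : 0 < p + q := add_pos hp hq
  have h := hconv.2 (div_nonneg hx hp.le) (div_nonneg hy hq.le)
    (div_nonneg hp.le hpq.le) (div_nonneg hq.le hpq.le) (by field_simp)
  have harg : p / (p + q) * (x / p) + q / (p + q) * (y / q) = (x + y) / (p + q) := by
    field_simp
  rwa [smul_eq_mul, smul_eq_mul, harg] at h

lemma ConvexOn.map_abs_add_div_add_le (hconv : ConvexOn ℝ (Ici 0) Φ)
    (hmono : MonotoneOn Φ (Ici 0)) {p q : ℝ} (hp : 0 < p) (hq : 0 < q) (x y : ℝ) :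
    Φ (|x + y| / (p + q)) ≤ p / (p + q) * Φ (|x| / p) + q / (p + q) * Φ (|y| / q) := by
  have hpq : 0 < p + q := add_pos hp hq
  calc Φ (|x + y| / (p + q)) ≤ Φ ((|x| + |y|) / (p + q)) :=
        hmono (div_nonneg (abs_nonneg _) hpq.le) (div_nonneg (by positivity) hpq.le)
          (by gcongr; exact abs_add_le x y)
    _ ≤ _ := hconv.map_add_div_add_le (abs_nonneg x) (abs_nonneg y) hp hq

lemma ConvexOn.continuousOn_Ici_zero (hconv : ConvexOn ℝ (Ici 0) Φ)
    (hmono : MonotoneOn Φ (Ici 0)) (hΦ0 : Φ 0 = 0) : ContinuousOn Φ (Ici 0) := by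
  refine hconv.continuousOn_Ici ?_
  have hlin : Tendsto (fun t => t * Φ 1) (𝓝[Ici 0] 0) (𝓝 0) := by
    simpa using ((continuous_mul_const (Φ 1)).tendsto' 0 0 (zero_mul _)).mono_left
      nhdsWithin_le_nhds
  rw [ContinuousWithinAt, hΦ0]
  -- squeeze `0 ≤ Φ t ≤ t Φ(1)` for `t ∈ [0, 1]`
  refine tendsto_of_tendsto_of_tendsto_of_le_of_le' tendsto_const_nhds hlin ?_ ?_
  · filter_upwards [self_mem_nhdsWithin] with t ht using map_nonneg_of_monotoneOn hmono hΦ0 ht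
  · filter_upwards [self_mem_nhdsWithin, nhdsWithin_le_nhds (Iic_mem_nhds one_pos)]
      with t ht ht1
    simpa using hconv.map_le_div_mul_map hΦ0 ht ht1

lemma ConvexOn.exists_one_le_map (hconv : ConvexOn ℝ (Ici 0) Φ)
    (hmono : MonotoneOn Φ (Ici 0)) (hΦ0 : Φ 0 = 0) (hΦnz : ∃ t > (0:ℝ), Φ t ≠ 0) :
    ∃ s, 0 ≤ s ∧ 1 ≤ Φ s := by
  obtain ⟨t, ht, hne⟩ := hΦnz
  have hpos : 0 < Φ t := (map_nonneg_of_monotoneOn hmono hΦ0 ht.le).lt_of_ne' hne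
  set s := t * (1 + (Φ t)⁻¹)
  have hts : t ≤ s := le_mul_of_one_le_right ht.le (by simp [hpos.le])
  have h := hconv.map_le_div_mul_map hΦ0 ht.le hts
  refine ⟨s, ht.le.trans hts, ?_⟩
  rw [div_mul_cancel_left₀ ht.ne', ← div_eq_inv_mul, le_div_iff₀ (by positivity)] at h
  rw [mul_add, mul_one, mul_inv_cancel₀ hpos.ne'] at h
  linarith

lemma ConvexOn.le_invPhiOne (hconv : ConvexOn ℝ (Ici 0) Φ)
    (hmono : MonotoneOn Φ (Ici 0)) (hΦ0 : Φ 0 = 0) (hΦnz : ∃ t > (0:ℝ), Φ t ≠ 0) {u : ℝ}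
    (hu : 0 ≤ u) (hΦu : Φ u ≤ 1) : u ≤ invPhiOne Φ := by
  refine le_csInf (hconv.exists_one_le_map hmono hΦ0 hΦnz) fun t ⟨ht, hΦt⟩ => ?_
  by_contra! htu
  have hlt : t / u < 1 := (div_lt_one (ht.trans_lt htu)).2 htu
  have := hconv.map_le_div_mul_map hΦ0 ht htu.le
  nlinarith [div_nonneg ht hu]

lemma invPhiOne_nonneg : 0 ≤ invPhiOne Φ :=
  Real.sInf_nonneg fun _ ht => ht.1

end OrliczFunction

section Luxemburg

variable {Ω : Type*} [MeasurableSpace Ω] {μ : Measure Ω} {Φ : ℝ → ℝ} {g h : Ω → ℝ}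

def luxAdmissible (μ : Measure Ω) (Φ : ℝ → ℝ) (g : Ω → ℝ) : Set ℝ :=
  {lam | 0 < lam ∧ ∫ ω, Φ (|g ω| / lam) ∂μ ≤ 1}

/-- The Orlicz heart (Morse–Transue space) of `Φ`. -/
def MemOrliczHeart (μ : Measure Ω) (Φ : ℝ → ℝ) (g : Ω → ℝ) : Prop :=
  ∀ lam > (0:ℝ), Integrable (fun ω => Φ (|g ω| / lam)) μ

lemma luxNorm_nonneg : 0 ≤ luxNorm μ Φ g :=
  Real.sInf_nonneg fun _ h => h.1.le

lemma luxNorm_le {lam : ℝ} (h : lam ∈ luxAdmissible μ Φ g) : luxNorm μ Φ g ≤ lam :=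
  csInf_le ⟨0, fun _ h => h.1.le⟩ h

lemma le_luxNorm {b : ℝ} (hne : (luxAdmissible μ Φ g).Nonempty)
    (h : ∀ lam ∈ luxAdmissible μ Φ g, b ≤ lam) : b ≤ luxNorm μ Φ g :=
  le_csInf hne h

lemma luxNorm_const_mul (hΦ0 : Φ 0 = 0) (c : ℝ) :
    luxNorm μ Φ (fun ω => c * g ω) = |c| * luxNorm μ Φ g := by
  show sInf (luxAdmissible μ Φ _) = |c| * sInf (luxAdmissible μ Φ g)
  rcases eq_or_ne c 0 with rfl | hc
  · have hall : luxAdmissible μ Φ (fun ω => 0 * g ω) = Ioi 0 := by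
      ext lam
      simp [luxAdmissible, hΦ0]
    rw [hall, csInf_Ioi, abs_zero, zero_mul]
  have hc' : 0 < |c| := abs_pos.2 hc
  have hset : luxAdmissible μ Φ (fun ω => c * g ω) = |c| • luxAdmissible μ Φ g := by
    ext lam
    rw [mem_smul_set_iff_inv_smul_mem₀ hc'.ne']
    simp only [luxAdmissible, mem_ofPred_eq, smul_eq_mul, abs_mul, div_mul_eq_div_div,
      div_inv_eq_mul, mul_comm _ |c|, mul_pos_iff_of_pos_left (inv_pos.2 hc')]
  rw [hset, Real.sInf_smul_of_nonneg hc'.le, smul_eq_mul]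

lemma aestronglyMeasurable_comp_abs_div (hcont : ContinuousOn Φ (Ici 0))
    (hg : AEStronglyMeasurable g μ) {lam : ℝ} (hlam : 0 ≤ lam) :
    AEStronglyMeasurable (fun ω => Φ (|g ω| / lam)) μ :=
  (hcont.comp_continuous (continuous_abs.div_const lam)
    fun x => div_nonneg (abs_nonneg x) hlam).comp_aestronglyMeasurable hg

lemma luxNorm_eq_zero_of_not_memOrliczHeart (hconv : ConvexOn ℝ (Ici 0) Φ)
    (hmono : MonotoneOn Φ (Ici 0)) (hΦ0 : Φ 0 = 0) (hg : AEStronglyMeasurable g μ)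
    (hheart : ¬ MemOrliczHeart μ Φ g) : luxNorm μ Φ g = 0 := by
  obtain ⟨lam₀, hlam₀, hni⟩ : ∃ lam₀ > (0:ℝ), ¬ Integrable (fun ω => Φ (|g ω| / lam₀)) μ := by
    simpa [MemOrliczHeart] using hheart
  -- below `lam₀` the integrand only grows, so its integral takes the junk value `0`
  have hsmall : ∀ lam ∈ Ioc 0 lam₀, lam ∈ luxAdmissible μ Φ g := by
    rintro lam ⟨hlam, hle⟩
    have hni' : ¬ Integrable (fun ω => Φ (|g ω| / lam)) μ := fun hint =>
      hni <| hint.mono'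
        (aestronglyMeasurable_comp_abs_div (hconv.continuousOn_Ici_zero hmono hΦ0) hg hlam₀.le)
        (ae_of_all _ fun ω => by
          rw [Real.norm_of_nonneg (map_nonneg_of_monotoneOn hmono hΦ0 (by positivity))]
          exact hmono (div_nonneg (abs_nonneg _) hlam₀.le) (div_nonneg (abs_nonneg _) hlam.le)
            (by gcongr))
    exact ⟨hlam, by rw [integral_undef hni']; exact zero_le_one⟩
  refine le_antisymm (le_of_forall_pos_le_add fun ε hε => ?_) luxNorm_nonneg
  rw [zero_add]
  exact (luxNorm_le (hsmall _ ⟨lt_min hlam₀ hε, min_le_left _ _⟩)).trans (min_le_right _ _)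

lemma MemOrliczHeart.const [IsFiniteMeasure μ] (c : ℝ) : MemOrliczHeart μ Φ (fun _ => c) :=
  fun _ _ => integrable_const _

lemma MemOrliczHeart.add (hconv : ConvexOn ℝ (Ici 0) Φ) (hmono : MonotoneOn Φ (Ici 0))
    (hΦ0 : Φ 0 = 0) (hg : MemOrliczHeart μ Φ g) (hh : MemOrliczHeart μ Φ h)
    (hgh : AEStronglyMeasurable (fun ω => g ω + h ω) μ) :
    MemOrliczHeart μ Φ (fun ω => g ω + h ω) := by
  intro lam hlam
  have hhalf : 0 < lam / 2 := half_pos hlam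
  refine (((hg _ hhalf).const_mul (1 / 2)).add ((hh _ hhalf).const_mul (1 / 2))).mono'
    (aestronglyMeasurable_comp_abs_div (hconv.continuousOn_Ici_zero hmono hΦ0) hgh hlam.le)
    (ae_of_all _ fun ω => ?_)
  rw [Real.norm_of_nonneg (map_nonneg_of_monotoneOn hmono hΦ0 (by positivity))]
  have := hconv.map_abs_add_div_add_le hmono hhalf hhalf (g ω) (h ω)
  have hcoef : lam / 2 / lam = 1 / 2 := by field_simp
  rwa [add_halves, hcoef] at this

/-- By dominated convergence, `∫ Φ (|g| / lam) → Φ 0 = 0` as `lam → ∞`. -/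
lemma MemOrliczHeart.luxAdmissible_nonempty (hconv : ConvexOn ℝ (Ici 0) Φ)
    (hmono : MonotoneOn Φ (Ici 0)) (hΦ0 : Φ 0 = 0) (hg : MemOrliczHeart μ Φ g) :
    (luxAdmissible μ Φ g).Nonempty := by
  have hcont := hconv.continuousOn_Ici_zero hmono hΦ0
  have hlim : Tendsto (fun lam => ∫ ω, Φ (|g ω| / lam) ∂μ) atTop (𝓝 0) := by
    have := tendsto_integral_filter_of_dominated_convergence (fun ω => Φ (|g ω| / 1))
      (F := fun lam ω => Φ (|g ω| / lam)) (f := fun _ => Φ 0)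
      (by filter_upwards [eventually_gt_atTop 0] with lam hlam
          using (hg lam hlam).aestronglyMeasurable)
      (by filter_upwards [eventually_ge_atTop 1] with lam hlam
          refine ae_of_all _ fun ω => ?_
          rw [Real.norm_of_nonneg (map_nonneg_of_monotoneOn hmono hΦ0 (by positivity))]
          exact hmono (div_nonneg (abs_nonneg _) (zero_le_one.trans hlam))
            (show (0:ℝ) ≤ |g ω| / 1 by positivity) (by gcongr))
      (hg 1 one_pos)
      (ae_of_all _ fun ω => (hcont 0 self_mem_Ici).tendsto.comp <|
        tendsto_nhdsWithin_iff.2 ⟨tendsto_const_nhds.div_atTop tendsto_id,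
          by filter_upwards [eventually_ge_atTop 0] with lam hlam
             using div_nonneg (abs_nonneg _) hlam⟩)
    simpa [hΦ0] using this
  obtain ⟨lam, hle, hpos⟩ :=
    ((hlim.eventually (ge_mem_nhds one_pos)).and (eventually_gt_atTop 0)).exists
  exact ⟨lam, hpos, hle⟩

lemma add_mem_luxAdmissible (hconv : ConvexOn ℝ (Ici 0) Φ) (hmono : MonotoneOn Φ (Ici 0))
    (hΦ0 : Φ 0 = 0) (hg : MemOrliczHeart μ Φ g) (hh : MemOrliczHeart μ Φ h) {lam rho : ℝ}
    (hlam : lam ∈ luxAdmissible μ Φ g) (hrho : rho ∈ luxAdmissible μ Φ h) :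
    lam + rho ∈ luxAdmissible μ Φ (fun ω => g ω + h ω) := by
  obtain ⟨hlam, hg1⟩ := hlam
  obtain ⟨hrho, hh1⟩ := hrho
  have hsum : 0 < lam + rho := add_pos hlam hrho
  refine ⟨hsum, ?_⟩
  calc ∫ ω, Φ (|g ω + h ω| / (lam + rho)) ∂μ
      ≤ ∫ ω, (lam / (lam + rho) * Φ (|g ω| / lam) + rho / (lam + rho) * Φ (|h ω| / rho)) ∂μ :=
        integral_mono_of_nonneg
          (ae_of_all _ fun ω => map_nonneg_of_monotoneOn hmono hΦ0 (by positivity))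
          (((hg lam hlam).const_mul _).add ((hh rho hrho).const_mul _))
          (ae_of_all _ fun ω => hconv.map_abs_add_div_add_le hmono hlam hrho (g ω) (h ω))
    _ = lam / (lam + rho) * ∫ ω, Φ (|g ω| / lam) ∂μ
          + rho / (lam + rho) * ∫ ω, Φ (|h ω| / rho) ∂μ := by
        rw [integral_add ((hg lam hlam).const_mul _) ((hh rho hrho).const_mul _),
          integral_const_mul, integral_const_mul]
    _ ≤ lam / (lam + rho) * 1 + rho / (lam + rho) * 1 := by gcongr
    _ = 1 := by field_simp

lemma luxNorm_add_le (hconv : ConvexOn ℝ (Ici 0) Φ) (hmono : MonotoneOn Φ (Ici 0))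
    (hΦ0 : Φ 0 = 0) (hg : MemOrliczHeart μ Φ g) (hh : MemOrliczHeart μ Φ h) :
    luxNorm μ Φ (fun ω => g ω + h ω) ≤ luxNorm μ Φ g + luxNorm μ Φ h := by
  have hle : ∀ lam ∈ luxAdmissible μ Φ g, ∀ rho ∈ luxAdmissible μ Φ h,
      luxNorm μ Φ (fun ω => g ω + h ω) ≤ lam + rho := fun lam hlam rho hrho =>
    luxNorm_le (add_mem_luxAdmissible hconv hmono hΦ0 hg hh hlam hrho)
  have hg' : luxNorm μ Φ (fun ω => g ω + h ω) - luxNorm μ Φ h ≤ luxNorm μ Φ g :=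
    le_luxNorm (hg.luxAdmissible_nonempty hconv hmono hΦ0) fun lam hlam =>
      sub_le_comm.1 <| le_luxNorm (hh.luxAdmissible_nonempty hconv hmono hΦ0)
        fun rho hrho => sub_le_iff_le_add'.2 (hle lam hlam rho hrho)
  linarith

lemma integral_abs_le_invPhiOne_mul_luxNorm [IsProbabilityMeasure μ]
    (hconv : ConvexOn ℝ (Ici 0) Φ) (hmono : MonotoneOn Φ (Ici 0)) (hΦ0 : Φ 0 = 0)
    (hΦnz : ∃ t > (0:ℝ), Φ t ≠ 0) (hgi : Integrable g μ) (hg : MemOrliczHeart μ Φ g) :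
    ∫ ω, |g ω| ∂μ ≤ invPhiOne Φ * luxNorm μ Φ g := by
  rw [← smul_eq_mul, luxNorm, ← Real.sInf_smul_of_nonneg invPhiOne_nonneg]
  refine le_csInf (hg.luxAdmissible_nonempty hconv hmono hΦ0).smul_set ?_
  rintro _ ⟨lam, ⟨hlam, hle⟩, rfl⟩
  have hjensen : Φ ((∫ ω, |g ω| ∂μ) / lam) ≤ ∫ ω, Φ (|g ω| / lam) ∂μ := by
    rw [← integral_div]
    exact hconv.map_integral_le (hconv.continuousOn_Ici_zero hmono hΦ0) isClosed_Ici
      (ae_of_all _ fun ω => div_nonneg (abs_nonneg _) hlam.le) (hgi.abs.div_const lam)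
      (hg lam hlam)
  have := hconv.le_invPhiOne hmono hΦ0 hΦnz (by positivity) (hjensen.trans hle)
  rwa [div_le_iff₀ hlam] at this

end Luxemburg

theorem stmt_12_general {Ω : Type*} [MeasurableSpace Ω] (μ : Measure Ω) [IsProbabilityMeasure μ]
    (Φ : ℝ → ℝ) (hconv : ConvexOn ℝ (Set.Ici 0) Φ) (hmono : MonotoneOn Φ (Set.Ici 0))
    (hΦ0 : Φ 0 = 0) (hΦnz : ∃ t > (0:ℝ), Φ t ≠ 0)
    (f : Ω → ℝ) (hfint : Integrable f μ)
    (Mf : ℝ) :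
    luxNorm μ Φ (fun ω => f ω - ∫ ω, f ω ∂μ)
      ≤ (1 + invPhiOne Φ * luxNorm μ Φ (fun _ => (1:ℝ)))
          * luxNorm μ Φ (fun ω => f ω - Mf) := by
  set m := ∫ ω, f ω ∂μ
  have hfm : AEStronglyMeasurable f μ := hfint.1
  have hnorm₁ : 0 ≤ luxNorm μ Φ (fun _ => (1:ℝ)) := luxNorm_nonneg
  have hnorm : 0 ≤ luxNorm μ Φ (fun ω => f ω - Mf) := luxNorm_nonneg
  have hinv : 0 ≤ invPhiOne Φ := invPhiOne_nonneg
  by_cases hm : MemOrliczHeart μ Φ (fun ω => f ω - m)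
  swap
  · rw [luxNorm_eq_zero_of_not_memOrliczHeart hconv hmono hΦ0 (by fun_prop) hm]
    positivity
  have hMf : MemOrliczHeart μ Φ (fun ω => f ω - Mf) := by
    simpa using hm.add hconv hmono hΦ0 (MemOrliczHeart.const (m - Mf)) (by fun_prop)
  have hmean : |Mf - m| ≤ invPhiOne Φ * luxNorm μ Φ (fun ω => f ω - Mf) := calc
    |Mf - m| = |∫ ω, (f ω - Mf) ∂μ| := by
      rw [integral_sub hfint (integrable_const Mf), integral_const, abs_sub_comm]; simp [m]
    _ ≤ ∫ ω, |f ω - Mf| ∂μ := abs_integral_le_integral_abs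
    _ ≤ _ := integral_abs_le_invPhiOne_mul_luxNorm hconv hmono hΦ0 hΦnz
        (hfint.sub (integrable_const Mf)) hMf
  have hsplit : (fun ω => f ω - m) = fun ω => (f ω - Mf) + (Mf - m) * 1 := by
    funext ω; ring
  calc luxNorm μ Φ (fun ω => f ω - m)
      ≤ luxNorm μ Φ (fun ω => f ω - Mf) + luxNorm μ Φ (fun _ => (Mf - m) * 1) :=
        hsplit ▸ luxNorm_add_le hconv hmono hΦ0 hMf (MemOrliczHeart.const _)
    _ = luxNorm μ Φ (fun ω => f ω - Mf) + |Mf - m| * luxNorm μ Φ (fun _ => (1:ℝ)) := by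
        rw [luxNorm_const_mul hΦ0]
    _ ≤ luxNorm μ Φ (fun ω => f ω - Mf)
          + invPhiOne Φ * luxNorm μ Φ (fun ω => f ω - Mf) * luxNorm μ Φ (fun _ => (1:ℝ)) := by
        gcongr
    _ = _ := by ring

theorem stmt_12 {Ω : Type*} [MeasurableSpace Ω] (μ : Measure Ω) [IsProbabilityMeasure μ]
    (Φ : ℝ → ℝ) (hconv : ConvexOn ℝ (Set.Ici 0) Φ) (hmono : MonotoneOn Φ (Set.Ici 0))
    (hΦ0 : Φ 0 = 0) (hΦnz : ∃ t > (0:ℝ), Φ t ≠ 0)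
    (f : Ω → ℝ) (hfint : Integrable f μ)
    (hf : ∃ lam > (0:ℝ), ∫ ω, Φ (|f ω| / lam) ∂μ ≤ 1)
    (Mf : ℝ)
    (hmin : ∀ a : ℝ, luxNorm μ Φ (fun ω => f ω - Mf) ≤ luxNorm μ Φ (fun ω => f ω - a)) :
    luxNorm μ Φ (fun ω => f ω - ∫ ω, f ω ∂μ)
      ≤ (1 + invPhiOne Φ * luxNorm μ Φ (fun _ => (1:ℝ)))
          * luxNorm μ Φ (fun ω => f ω - Mf) :=
  stmt_12_general μ Φ hconv hmono hΦ0 hΦnz f hfint Mf
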